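/- arXiv:1912.03754 — 7 statements merged into one kernel-verified Lean document; each statement's English description precedes it below -/
import Mathlib

section
/- If G - xy is k-colorable and G is not k-colorable, then for every r with 2 ≤ r ≤ k, the edge xy belongs to at least ∏_{i=1}^{r-1}(k-i) cycles in G whose lengths are congruent to 1 modulo r. -/
/-- `H` is a cycle subgraph of `G` of length `n`: it is the subgraph traced by some
cycle (closed walk with distinct internal vertices) of length `n`. -/
def SimpleGraph.IsCycleSubgraph {V : Type*} (G : SimpleGraph V) (H : G.Subgraph) (n : ℕ) : Prop :=
  ∃ (v : V) (w : G.Walk v v), w.IsCycle ∧ w.length = n ∧ w.toSubgraph = H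

/-!
Let `C` be a `k`-colouring of `G - xy`; since `G` is not `k`-colourable, `C x = C y`. Fix an
injective cyclic sequence of colours `b : ZMod r → Fin k` with `b 0 = C x`; there are
`(k - 1)(k - 2)⋯(k - r + 1)` of them. Let `R` be the set of vertices reached from `y` in `G - xy`
by walks whose colours run through `b` cyclically. If `x ∉ R`, recolouring `R` by
`b j ↦ b (j + 1)` would colour `G` properly (`y` gets `b 1 ≠ b 0`). So some `y`–`x` path in
`G - xy` follows `b`; its length is divisible by `r`, so together with `xy` it closes a cycle of
length `≡ 1 (mod r)`, and the colours along that cycle give back `b`, so different sequences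
give different cycles.
-/

open Function

lemma Nat.prod_Icc_sub_eq_descFactorial (k m : ℕ) :
    ∏ i ∈ Finset.Icc 1 m, (k - i) = (k - 1).descFactorial m := by
  induction m with
  | zero => simp
  | succ m ih =>
    rw [Finset.prod_Icc_succ_top (by omega), ih, Nat.descFactorial_succ, mul_comm]
    congr 1
    omega

namespace SimpleGraph

variable {V α : Type*} {G : SimpleGraph V} {r : ℕ}

namespace Walk

lemma mem_edges_iff_mem_edges_cons {u v w : V} {h : G.Adj u v} {p : G.Walk v w}
    (hp : s(u, v) ∉ p.edges) {e : Sym2 V} :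
    e ∈ p.edges ↔ e ∈ (cons h p).edges ∧ e ≠ s(u, v) := by
  rw [edges_cons, List.mem_cons]
  constructor
  · rintro he
    exact ⟨.inr he, fun h => hp (h ▸ he)⟩
  · rintro ⟨he | he, hne⟩
    exacts [absurd he hne, he]

lemma IsPath.eq_of_mem_edges_iff {u v : V} {p q : G.Walk u v} (hp : p.IsPath) (hq : q.IsPath)
    (h : ∀ e, e ∈ p.edges ↔ e ∈ q.edges) : p = q := by
  induction p with
  | nil => exact (isPath_iff_nil.mp hq).eq_nil.symm
  | @cons u w v hadj p ih =>
    cases q with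
    | nil => simpa using h s(u, w)
    | @cons _ w' _ hadj' q =>
      rw [cons_isPath_iff] at hp hq
      have hp' : s(u, w) ∉ p.edges := fun he => hp.2 (p.fst_mem_support_of_mem_edges he)
      have hq' : s(u, w) ∉ q.edges := fun he => hq.2 (q.fst_mem_support_of_mem_edges he)
      obtain rfl : w = w' := by
        have := (h s(u, w)).mp (by simp)
        rw [edges_cons, List.mem_cons, Sym2.congr_right] at this
        exact this.resolve_right hq'
      rw [ih hp.1 hq.1 fun e => by
        rw [mem_edges_iff_mem_edges_cons (h := hadj) hp',
          mem_edges_iff_mem_edges_cons (h := hadj') hq', h]]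

lemma IsCycle.eq_of_cons_toSubgraph_eq {u v : V} {h : G.Adj u v} {p q : G.Walk v u}
    (hp : (cons h p).IsCycle) (hq : (cons h q).IsCycle)
    (hpq : (cons h p).toSubgraph = (cons h q).toSubgraph) : p = q := by
  rw [cons_isCycle_iff] at hp hq
  refine hp.1.eq_of_mem_edges_iff hq.1 fun e => ?_
  rw [mem_edges_iff_mem_edges_cons (h := h) hp.2, mem_edges_iff_mem_edges_cons (h := h) hq.2,
    ← mem_edges_toSubgraph, ← mem_edges_toSubgraph, hpq]

def FollowsPattern (C : V → α) (b : ZMod r → α) {u v : V} (p : G.Walk u v) : Prop :=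
  ∀ d ∈ p.darts, ∃ j, C d.fst = b j ∧ C d.snd = b (j + 1)

namespace FollowsPattern

variable {C : V → α} {b : ZMod r → α} {u v : V} {p : G.Walk u v}

lemma concat (hp : p.FollowsPattern C b) {w : V} (h : G.Adj v w) {j : ZMod r}
    (hv : C v = b j) (hw : C w = b (j + 1)) : (p.concat h).FollowsPattern C b := by
  intro d hd
  rw [darts_concat, List.concat_eq_append, List.mem_append, List.mem_singleton] at hd
  rcases hd with hd | rfl
  exacts [hp d hd, ⟨j, hv, hw⟩]

lemma bypass [DecidableEq V] (hp : p.FollowsPattern C b) : p.bypass.FollowsPattern C b :=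
  fun d hd => hp d (p.darts_bypass_subset_darts hd)

lemma color_getVert (hb : Injective b) (hp : p.FollowsPattern C b) {j : ZMod r}
    (hu : C u = b j) {i : ℕ} (hi : i ≤ p.length) : C (p.getVert i) = b (j + i) := by
  induction p generalizing j i with
  | nil => simp_all
  | @cons u w v h p ih =>
    obtain ⟨j', hj', hw⟩ := hp ⟨(u, w), h⟩ (by simp)
    obtain rfl : j' = j := hb (hj'.symm.trans hu)
    cases i with
    | zero => simpa using hu
    | succ i =>
      rw [getVert_cons_succ, ih (fun d hd => hp d (by simp [hd])) hw (by simpa using hi)]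
      push_cast
      ring_nf

lemma dvd_length (hb : Injective b) (hp : p.FollowsPattern C b)
    (hu : C u = b 0) (hv : C v = b 0) : r ∣ p.length := by
  have := hp.color_getVert hb hu le_rfl
  rw [getVert_length, hv, zero_add] at this
  exact (ZMod.natCast_eq_zero_iff _ _).mp (hb this).symm

lemma le_length (hb : Injective b) (hp : p.FollowsPattern C b) (hu : C u = b 0) (hv : C v = b 0)
    (huv : u ≠ v) : r ≤ p.length :=
  Nat.le_of_dvd (Nat.pos_of_ne_zero fun h => huv (eq_of_length_eq_zero h)) (hp.dvd_length hb hu hv)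

lemma pattern_eq [NeZero r] {b' : ZMod r → α} (hb : Injective b) (hb' : Injective b')
    (hp : p.FollowsPattern C b) (hp' : p.FollowsPattern C b') (hu : C u = b 0) (hu' : C u = b' 0)
    (hr : r ≤ p.length + 1) : b = b' := by
  funext j
  have hj : j.val ≤ p.length := by have := j.val_lt; omega
  have h := hp.color_getVert hb hu hj
  rw [hp'.color_getVert hb' hu' hj, zero_add, ZMod.natCast_zmod_val] at h
  exact h.symm

end FollowsPattern

end Walk

def Coloring.ofDeleteEdge {x y : V} (c : V → α)
    (hc : ∀ ⦃u v⦄, (G.deleteEdges {s(x, y)}).Adj u v → c u ≠ c v) (hxy : c x ≠ c y) :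
    G.Coloring α :=
  Coloring.mk c fun {u v} huv => by
    by_cases he : s(u, v) = s(x, y)
    · rcases Sym2.eq_iff.mp he with ⟨rfl, rfl⟩ | ⟨rfl, rfl⟩
      exacts [hxy, hxy.symm]
    · exact hc (deleteEdges_adj.mpr ⟨huv, he⟩)

lemma Coloring.apply_eq_of_deleteEdges {x y : V} (hG : ¬ Nonempty (G.Coloring α))
    (C : (G.deleteEdges {s(x, y)}).Coloring α) : C x = C y := by
  by_contra h
  exact hG ⟨.ofDeleteEdge C (fun _ _ => C.valid) h⟩

open Classical in
/-- The colour permutation `b j ↦ b (j + 1)`, fixing the colours outside the range of `b`. -/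
noncomputable def patternShift {b : ZMod r → α} (hb : Injective b) : Equiv.Perm α :=
  (Equiv.addRight 1).extendDomain (Equiv.ofInjective b hb)

section patternShift

variable {b : ZMod r → α} (hb : Injective b)

lemma patternShift_apply (j : ZMod r) : patternShift hb (b j) = b (j + 1) := by
  classical
  simpa [patternShift] using
    Equiv.Perm.extendDomain_apply_image (Equiv.addRight 1) (Equiv.ofInjective b hb) j

lemma patternShift_apply_of_notMem {c : α} (hc : c ∉ Set.range b) : patternShift hb c = c := by
  classical
  exact Equiv.Perm.extendDomain_apply_not_subtype _ _ hc

lemma Coloring.ite_patternShift_ne {H : SimpleGraph V} (C : H.Coloring α) {R : Set V}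
    [DecidablePred (· ∈ R)]
    (hR : ∀ ⦃u v j⦄, u ∈ R → H.Adj u v → C u = b j → C v = b (j + 1) → v ∈ R)
    ⦃u v : V⦄ (huv : H.Adj u v) :
    (if u ∈ R then patternShift hb (C u) else C u) ≠
      (if v ∈ R then patternShift hb (C v) else C v) := by
  have boundary :
      ∀ ⦃u v⦄, H.Adj u v → u ∈ R → v ∉ R → patternShift hb (C u) ≠ C v := by
    intro u v huv hu hv heq
    by_cases hc : C u ∈ Set.range b
    · obtain ⟨j, hj⟩ := hc
      rw [← hj, patternShift_apply] at heq
      exact hv (hR hu huv hj.symm heq.symm)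
    · rw [patternShift_apply_of_notMem hb hc] at heq
      exact C.valid huv heq
  by_cases hu : u ∈ R <;> by_cases hv : v ∈ R <;> simp only [hu, hv, if_true, if_false]
  · exact (patternShift hb).injective.ne (C.valid huv)
  · exact boundary huv hu hv
  · exact (boundary huv.symm hv hu).symm
  · exact C.valid huv

end patternShift

theorem exists_isPath_followsPattern {x y : V} (hG : ¬ Nonempty (G.Coloring α))
    (C : (G.deleteEdges {s(x, y)}).Coloring α) {b : ZMod r → α} (hb : Injective b)
    (hr : r ≠ 1)
    (hx : C x = b 0) (hy : C y = b 0) :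
    ∃ p : (G.deleteEdges {s(x, y)}).Walk y x, p.IsPath ∧ p.FollowsPattern C b := by
  classical
  set R : Set V := {v | ∃ p : (G.deleteEdges {s(x, y)}).Walk y v, p.FollowsPattern C b}
  by_cases hxR : x ∈ R
  · obtain ⟨p, hp⟩ := hxR
    exact ⟨p.bypass, p.bypass_isPath, hp.bypass⟩
  -- otherwise shifting the colours on `R` would colour `G`
  have hR : ∀ ⦃u v j⦄, u ∈ R → (G.deleteEdges {s(x, y)}).Adj u v → C u = b j →
      C v = b (j + 1) → v ∈ R :=
    fun _ _ _ ⟨p, hp⟩ huv hu hv => ⟨p.concat huv, hp.concat huv hu hv⟩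
  have hyR : y ∈ R := ⟨.nil, by simp [Walk.FollowsPattern]⟩
  have h10 : (1 : ZMod r) ≠ 0 := by
    rw [← Nat.cast_one, Ne, ZMod.natCast_eq_zero_iff, Nat.dvd_one]
    exact hr
  refine absurd ⟨Coloring.ofDeleteEdge _ (C.ite_patternShift_ne hb hR) ?_⟩ hG
  rw [if_neg hxR, if_pos hyR, hx, hy, patternShift_apply, zero_add]
  exact fun h => h10 (hb h).symm

lemma Walk.IsPath.isCycle_cons_mapLe {x y : V} (hxy : G.Adj x y)
    {p : (G.deleteEdges {s(x, y)}).Walk y x} (hp : p.IsPath) :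
    (Walk.cons hxy (p.mapLe (G.deleteEdges_le _))).IsCycle := by
  refine (Walk.cons_isCycle_iff _ _).mpr ⟨hp.mapLe _, fun h => ?_⟩
  rw [Walk.edges_mapLe_eq_edges] at h
  simpa using p.edges_subset_edgeSet h

lemma Walk.FollowsPattern.toSubgraph_cons_mapLe_mem {x y : V} (hxy : G.Adj x y)
    {C : V → α} {b : ZMod r → α} (hb : Injective b) (hr : 1 < r) (hx : C x = b 0)
    (hy : C y = b 0) {p : (G.deleteEdges {s(x, y)}).Walk y x} (hp : p.IsPath)
    (hpb : p.FollowsPattern C b) :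
    (Walk.cons hxy (p.mapLe (G.deleteEdges_le _))).toSubgraph ∈
      {H : G.Subgraph | H.Adj x y ∧ ∃ n, n % r = 1 ∧ G.IsCycleSubgraph H n} := by
  refine ⟨by simp, _, ?_, _, _, hp.isCycle_cons_mapLe hxy, rfl, rfl⟩
  obtain ⟨t, ht⟩ := hpb.dvd_length hb hy hx
  rw [Walk.length_cons, Walk.length_mapLe, ht, Nat.mul_add_mod, Nat.mod_eq_of_lt hr]

/-- Typechecks because `ZMod (m + 1)` is `Fin (m + 1)` by definition. -/
def consPattern {m : ℕ} (a : α) (g : Fin m ↪ {c // c ≠ a}) : ZMod (m + 1) → α :=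
  Fin.cons a fun i => (g i : α)

section consPattern

variable {m : ℕ} {a : α}

lemma consPattern_zero (g : Fin m ↪ {c // c ≠ a}) : consPattern a g 0 = a := rfl

lemma consPattern_injective (g : Fin m ↪ {c // c ≠ a}) : Injective (consPattern a g) :=
  Fin.cons_injective_iff.mpr
    ⟨fun ⟨i, hi⟩ => (g i).2 hi, Subtype.val_injective.comp g.injective⟩

lemma injective_consPattern : Injective (consPattern (m := m) a) := fun _ _ h =>
  DFunLike.ext _ _ fun i => Subtype.ext (congrFun (Fin.cons_right_injective _ h) i)

end consPattern

theorem card_embedding_le_ncard_cycleSubgraphs [Finite V] {x y : V} (hxy : G.Adj x y)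
    (hG : ¬ Nonempty (G.Coloring α)) (C : (G.deleteEdges {s(x, y)}).Coloring α) {m : ℕ}
    (hm : m ≠ 0) :
    Nat.card (Fin m ↪ {c // c ≠ C x}) ≤
      {H : G.Subgraph | H.Adj x y ∧ ∃ n, n % (m + 1) = 1 ∧ G.IsCycleSubgraph H n}.ncard := by
  have hy (g : Fin m ↪ {c // c ≠ C x}) : C y = consPattern (C x) g 0 :=
    (C.apply_eq_of_deleteEdges hG).symm
  choose P hP hPb using fun g => exists_isPath_followsPattern hG C (consPattern_injective g)
    (by omega) (consPattern_zero g).symm (hy g)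
  rw [← Set.ncard_univ]
  refine Set.ncard_le_ncard_of_injOn
    (fun g => (Walk.cons hxy ((P g).mapLe (G.deleteEdges_le _))).toSubgraph) ?_ ?_ (Set.toFinite _)
  · intro g _
    exact (hPb g).toSubgraph_cons_mapLe_mem hxy (consPattern_injective g) (by omega) rfl (hy g)
      (hP g)
  intro g _ g' _ h
  have hPP : P g = P g' := Walk.map_injective_of_injective (fun _ _ h => h) _ _ <|
    ((hP g).isCycle_cons_mapLe hxy).eq_of_cons_toSubgraph_eq ((hP g').isCycle_cons_mapLe hxy) h
  have hlen : m + 1 ≤ (P g).length + 1 :=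
    ((hPb g).le_length (consPattern_injective g) (hy g) rfl hxy.ne.symm).trans (Nat.le_succ _)
  exact injective_consPattern ((hPb g).pattern_eq (consPattern_injective g)
    (consPattern_injective g') (hPP ▸ hPb g') (hy g) (hy g') hlen)

end SimpleGraph

theorem stmt0_general {V : Type*} [Fintype V] (G : SimpleGraph V) (x y : V) (hxy : G.Adj x y)
    (k : ℕ)
    (hdel : (G.deleteEdges {s(x, y)}).Colorable k) (hG : ¬ G.Colorable k)
    (r : ℕ) (hr2 : 2 ≤ r) :
    (∏ i ∈ Finset.Icc 1 (r - 1), (k - i)) ≤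
      {H : G.Subgraph | H.Adj x y ∧ ∃ n, n % r = 1 ∧ G.IsCycleSubgraph H n}.ncard := by
  obtain ⟨C⟩ := hdel
  obtain ⟨m, rfl⟩ : ∃ m, r = m + 1 := ⟨r - 1, by omega⟩
  calc ∏ i ∈ Finset.Icc 1 (m + 1 - 1), (k - i)
      = Nat.card (Fin m ↪ {c // c ≠ C x}) := by
        simp [Nat.prod_Icc_sub_eq_descFactorial, Fintype.card_embedding_eq]
    _ ≤ _ := SimpleGraph.card_embedding_le_ncard_cycleSubgraphs hxy hG C (by omega)

theorem stmt0 {V : Type*} [Fintype V] (G : SimpleGraph V) (x y : V) (hxy : G.Adj x y)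
    (k : ℕ) (hk : 2 ≤ k)
    (hdel : (G.deleteEdges {s(x, y)}).Colorable k) (hG : ¬ G.Colorable k)
    (r : ℕ) (hr2 : 2 ≤ r) (hrk : r ≤ k) :
    (∏ i ∈ Finset.Icc 1 (r - 1), (k - i)) ≤
      {H : G.Subgraph | H.Adj x y ∧ ∃ n, n % r = 1 ∧ G.IsCycleSubgraph H n}.ncard :=
  stmt0_general G x y hxy k hdel hG r hr2
end

section
/- Every graph with fewer than (k-1)! cycles of length congruent to 1 modulo k is k-colorable. -/
open Fin.NatCast
open scoped Nat

namespace SimpleGraph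

variable {V α : Type*} {G : SimpleGraph V}

def IsProperColoringOn (G : SimpleGraph V) (s : Set V) (c : V → α) : Prop :=
  ∀ ⦃x⦄, x ∈ s → ∀ ⦃y⦄, y ∈ s → G.Adj x y → c x ≠ c y

namespace IsProperColoringOn

variable {s : Set V} {c : V → α}

theorem update_insert [DecidableEq V] (hc : G.IsProperColoringOn s c) {v : V} {a : α}
    (ha : ∀ u ∈ s, G.Adj v u → c u ≠ a) :
    G.IsProperColoringOn (insert v s) (Function.update c v a) := by
  have hnbr : ∀ ⦃u⦄, u ∈ insert v s → G.Adj v u → Function.update c v a u ≠ a := by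
    intro u hu hvu
    rw [Function.update_of_ne hvu.ne']
    exact ha u (hu.resolve_left hvu.ne') hvu
  intro x hx y hy hxy
  by_cases hxv : x = v
  · subst hxv
    simpa using (hnbr hy hxy).symm
  by_cases hyv : y = v
  · subst hyv
    simpa using hnbr hx hxy.symm
  rw [Function.update_of_ne hxv, Function.update_of_ne hyv]
  exact hc (hx.resolve_left hxv) (hy.resolve_left hyv) hxy

theorem piecewise {π : α → α} (hπ : Function.Injective π) (hc : G.IsProperColoringOn s c)
    (A : Set V) [DecidablePred (· ∈ A)]
    (hA : ∀ x ∈ A, ∀ y ∈ s, G.Adj x y → c y = π (c x) → y ∈ A) :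
    G.IsProperColoringOn s (A.piecewise (π ∘ c) c) := by
  intro x hx y hy hxy
  by_cases hxA : x ∈ A <;> by_cases hyA : y ∈ A <;>
    simp only [Set.piecewise_eq_of_mem, Set.piecewise_eq_of_notMem, hxA, hyA,
      Function.comp_apply, ne_eq, not_false_eq_true]
  · exact hπ.ne (hc hx hy hxy)
  · exact fun h => hyA (hA x hxA y hy hxy h.symm)
  · exact fun h => hxA (hA y hyA x hx hxy.symm h)
  · exact hc hx hy hxy

end IsProperColoringOn

def ForcesAllColors (G : SimpleGraph V) (s : Set V) (v : V) (α : Type*) : Prop :=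
  ∀ c : V → α, G.IsProperColoringOn s c → ∀ a, ∃ u ∈ s, G.Adj v u ∧ c u = a

theorem exists_forcesAllColors [Finite V] [Nonempty α]
    (h : ¬ ∃ c : V → α, G.IsProperColoringOn Set.univ c) :
    ∃ (s : Set V) (v : V), v ∉ s ∧ (∃ c : V → α, G.IsProperColoringOn s c) ∧
      G.ForcesAllColors s v α := by
  classical
  obtain ⟨W, hW, hmin⟩ := exists_minimal_of_wellFoundedLT
    (fun W : Set V => ¬ ∃ c : V → α, G.IsProperColoringOn W c) ⟨Set.univ, h⟩
  have hcol : ∀ v ∈ W, ∃ c : V → α, G.IsProperColoringOn (W \ {v}) c := fun v hv =>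
    not_not.mp fun h' => (hmin h' Set.sdiff_subset hv).2 rfl
  obtain ⟨v, hv⟩ : W.Nonempty := Set.nonempty_iff_ne_empty.mpr fun hW0 =>
    hW ⟨fun _ => Classical.arbitrary α, by simp [hW0, IsProperColoringOn]⟩
  refine ⟨W \ {v}, v, by simp, hcol v hv, fun c hc a => ?_⟩
  by_contra! hmiss
  refine hW ⟨Function.update c v a, ?_⟩
  simpa [Set.insert_sdiff_singleton, Set.insert_eq_of_mem hv] using
    hc.update_insert fun u hu hvu => hmiss u hu hvu

theorem Walk.apply_getVert_eq_iterate {c : V → α} {π : α → α} :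
    ∀ {x y : V} (p : G.Walk x y), (∀ d ∈ p.darts, c d.snd = π (c d.fst)) →
      ∀ j ≤ p.length, c (p.getVert j) = π^[j] (c x)
  | _, _, .nil, _, j, hj => by simp_all
  | _, _, .cons _ _, _, 0, _ => rfl
  | _, _, .cons h p, hd, j + 1, hj => by
    rw [Walk.getVert_cons_succ, Function.iterate_succ_apply,
      p.apply_getVert_eq_iterate (fun d hd' => hd d (List.mem_cons_of_mem _ hd')) j
        (by simpa using hj),
      hd ⟨_, h⟩ List.mem_cons_self]

theorem ForcesAllColors.exists_isPath {s : Set V} {v : V} (hsat : G.ForcesAllColors s v α)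
    {c : V → α} (hc : G.IsProperColoringOn s c) {π : α → α} (hπ : Function.Injective π)
    (a : α) :
    ∃ (x y : V) (p : G.Walk x y), p.IsPath ∧ G.Adj v x ∧ G.Adj v y ∧ c x = a ∧ π (c y) = a ∧
      (∀ z ∈ p.support, z ∈ s) ∧ ∀ d ∈ p.darts, c d.snd = π (c d.fst) := by
  classical
  set A : Set V := {y | ∃ x, G.Adj v x ∧ c x = a ∧ ∃ p : G.Walk x y,
    (∀ z ∈ p.support, z ∈ s) ∧ ∀ d ∈ p.darts, c d.snd = π (c d.fst)}
  have hA : ∀ y ∈ A, ∀ z ∈ s, G.Adj y z → c z = π (c y) → z ∈ A := by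
    rintro y ⟨x, hvx, hcx, p, hps, hpd⟩ z hz hyz hcz
    refine ⟨x, hvx, hcx, p.concat hyz, fun u hu => ?_, fun d hd => ?_⟩
    · rw [Walk.support_concat, List.mem_append, List.mem_singleton] at hu
      exact hu.elim (hps u) (· ▸ hz)
    · rw [Walk.darts_concat, List.concat_eq_append, List.mem_append, List.mem_singleton] at hd
      exact hd.elim (hpd d) (· ▸ hcz)
  obtain ⟨y, hy, hvy, hcy⟩ := hsat _ (hc.piecewise hπ A hA) a
  by_cases hyA : y ∈ A
  · rw [Set.piecewise_eq_of_mem _ _ _ hyA] at hcy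
    obtain ⟨x, hvx, hcx, p, hps, hpd⟩ := hyA
    refine ⟨x, y, p.bypass, p.bypass_isPath, hvx, hvy, hcx, hcy,
      fun z hz => hps z (p.support_bypass_subset_support hz),
      fun d hd => hpd d (p.darts_bypass_subset_darts hd)⟩
  · rw [Set.piecewise_eq_of_notMem _ _ _ hyA] at hcy
    exact absurd ⟨y, hvy, hcy, .nil, by simpa using hy, by simp⟩ hyA

theorem Walk.IsPath.isCycle_cons_concat {x y v : V} {p : G.Walk x y} (hp : p.IsPath)
    (hv : v ∉ p.support) (hxy : x ≠ y) (hvx : G.Adj v x) (hyv : G.Adj y v) :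
    (Walk.cons hvx (p.concat hyv)).IsCycle := by
  refine (Walk.cons_isCycle_iff _ _).mpr ⟨hp.concat hv hyv, fun he => ?_⟩
  rw [Walk.edges_concat, List.concat_eq_append, List.mem_append, List.mem_singleton] at he
  rcases he with he | he
  · exact hv (p.fst_mem_support_of_mem_edges he)
  · rw [Sym2.eq_iff] at he
    rcases he with ⟨-, rfl⟩ | ⟨-, rfl⟩
    · exact hvx.ne rfl
    · exact hxy rfl

theorem Walk.getVert_concat_of_le {x y z : V} (p : G.Walk x y) (h : G.Adj y z) {i : ℕ}
    (hi : i ≤ p.length) : (p.concat h).getVert i = p.getVert i := by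
  rw [Walk.concat_eq_append, Walk.getVert_append', if_pos hi]

theorem Walk.IsCycle.getVert_eq_of_toSubgraph_eq {v : V} {w₁ w₂ : G.Walk v v}
    (h₁ : w₁.IsCycle) (h₂ : w₂.IsCycle) (hw : w₁.toSubgraph = w₂.toSubgraph)
    (hsnd : w₁.snd = w₂.snd) {i : ℕ} (hi₁ : i < w₁.length) (hi₂ : i < w₂.length) :
    w₁.getVert i = w₂.getVert i := by
  suffices ∀ i, i + 1 < w₁.length → i + 1 < w₂.length →
      w₁.getVert i = w₂.getVert i ∧ w₁.getVert (i + 1) = w₂.getVert (i + 1) by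
    rcases i with _ | i
    · simp
    · exact (this i hi₁ hi₂).2
  intro i
  induction i with
  | zero => intro _ _; simpa using hsnd
  | succ i ih =>
    intro hi₁ hi₂
    obtain ⟨hprev, hcur⟩ := ih (by omega) (by omega)
    refine ⟨hcur, ?_⟩
    have hmem : w₂.getVert (i + 2) ∈ w₁.toSubgraph.neighborSet (w₁.getVert (i + 1)) := by
      rw [hw, hcur, h₂.neighborSet_toSubgraph_internal (by omega) (by omega)]
      simp
    rw [h₁.neighborSet_toSubgraph_internal (by omega) (by omega)] at hmem
    rcases hmem with hmem | hmem
    · exact absurd (hmem.trans hprev) (h₂.getVert_sub_one_ne_getVert_add_one (i := i + 1)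
        (by omega)).symm
    · exact hmem.symm

section ColorOrder

variable {n : ℕ}

def Walk.IsColorOrderedCycle (c : V → Fin (n + 2)) (f : Equiv.Perm (Fin (n + 2))) {v : V}
    (w : G.Walk v v) : Prop :=
  w.IsCycle ∧ w.length % (n + 2) = 1 ∧
    ∀ j, 0 < j → j < w.length → c (w.getVert j) = f ((j : Fin (n + 2)) - 1)

theorem ForcesAllColors.exists_isColorOrderedCycle {s : Set V} {v : V}
    (hsat : G.ForcesAllColors s v (Fin (n + 2))) (hvs : v ∉ s) {c : V → Fin (n + 2)}
    (hc : G.IsProperColoringOn s c) {f : Equiv.Perm (Fin (n + 2))} (hf : f 0 = 0) :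
    ∃ w : G.Walk v v, w.IsColorOrderedCycle c f := by
  set π : Fin (n + 2) → Fin (n + 2) := fun i => f (f.symm i + 1)
  have hπ : Function.Injective π := fun i j h => by simpa [π] using f.injective h
  have hπf : ∀ i, π (f i) = f (i + 1) := fun i => by simp [π]
  have hiter : ∀ j : ℕ, π^[j] 0 = f j := by
    intro j
    induction j with
    | zero => simp [hf]
    | succ j ih => rw [Function.iterate_succ_apply', ih, hπf, Nat.cast_succ]
  obtain ⟨x, y, p, hp, hvx, hvy, hcx, hcy, hps, hpd⟩ := hsat.exists_isPath hc hπ 0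
  have hcol : ∀ j ≤ p.length, c (p.getVert j) = f j := fun j hj => by
    rw [p.apply_getVert_eq_iterate hpd j hj, hcx, hiter]
  have hlen : ((p.length + 1 : ℕ) : Fin (n + 2)) = 0 := by
    rw [← p.getVert_length, hcol _ le_rfl, hπf, ← hf] at hcy
    exact_mod_cast f.injective hcy
  have hxy : x ≠ y := by
    rintro rfl
    rw [Walk.length_eq_zero_iff.mpr (Walk.isPath_iff_nil.mp hp)] at hlen
    simp at hlen
  refine ⟨_, hp.isCycle_cons_concat (fun h => hvs (hps v h)) hxy hvx hvy.symm, ?_, ?_⟩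
  · obtain ⟨q, hq⟩ := Fin.natCast_eq_zero.mp hlen
    rw [Walk.length_cons, Walk.length_concat, show p.length + 1 + 1 = 1 + (n + 2) * q by omega,
      Nat.add_mul_mod_self_left]
    exact Nat.mod_eq_of_lt (by omega)
  · rintro (_ | j) hj0 hj
    · exact absurd hj0 (lt_irrefl 0)
    have hjp : j ≤ p.length := by simp only [Walk.length_cons, Walk.length_concat] at hj; omega
    rw [Walk.getVert_cons_succ, Walk.getVert_concat_of_le _ _ hjp, hcol j hjp]
    simp

theorem Walk.IsColorOrderedCycle.perm_eq_of_toSubgraph_eq {c : V → Fin (n + 2)}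
    {f g : Equiv.Perm (Fin (n + 2))} {v : V} {w₁ w₂ : G.Walk v v}
    (h₁ : w₁.IsColorOrderedCycle c f) (h₂ : w₂.IsColorOrderedCycle c g) (hf : f 0 = 0)
    (hg : g 0 = 0) (hw : w₁.toSubgraph = w₂.toSubgraph) : f = g := by
  obtain ⟨hcyc₁, hlen₁, hcol₁⟩ := h₁
  obtain ⟨hcyc₂, hlen₂, hcol₂⟩ := h₂
  have hlong : ∀ l, 3 ≤ l → l % (n + 2) = 1 → n + 2 < l := fun l hl hmod => by
    by_contra! h
    rcases h.lt_or_eq with h | rfl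
    · rw [Nat.mod_eq_of_lt h] at hmod; omega
    · simp at hmod
  have hlong₁ := hlong _ hcyc₁.three_le_length hlen₁
  have hlong₂ := hlong _ hcyc₂.three_le_length hlen₂
  have hsnd₂ : c w₂.snd = 0 := by simpa [hg] using hcol₂ 1 one_pos (by omega)
  have hpen₁ : c w₁.penultimate ≠ 0 := by
    have hdvd : ((w₁.length - 1 : ℕ) : Fin (n + 2)) = 0 :=
      Fin.natCast_eq_zero.mpr (hlen₁ ▸ Nat.dvd_sub_mod w₁.length)
    rw [Walk.penultimate, hcol₁ _ (by omega) (by omega), hdvd, zero_sub, ← hf, ne_eq,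
      f.injective.eq_iff]
    simp
  have hsnd : w₁.snd = w₂.snd := by
    have hmem : w₂.snd ∈ w₁.toSubgraph.neighborSet v := by
      rw [hw]
      exact w₂.toSubgraph_adj_snd hcyc₂.not_nil
    rw [hcyc₁.neighborSet_toSubgraph_endpoint] at hmem
    rcases hmem with h | h
    · exact h.symm
    · exact absurd (h ▸ hsnd₂) hpen₁
  ext x
  have h := hcol₁ (x + 1) (by omega) (by omega)
  rw [hcyc₁.getVert_eq_of_toSubgraph_eq hcyc₂ hw hsnd (by omega) (by omega),
    hcol₂ (x + 1) (by omega) (by omega)] at h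
  simpa using congrArg Fin.val h.symm

theorem ForcesAllColors.factorial_le_ncard [Finite V] {s : Set V} {v : V}
    (hsat : G.ForcesAllColors s v (Fin (n + 2))) (hvs : v ∉ s) {c : V → Fin (n + 2)}
    (hc : G.IsProperColoringOn s c) :
    (n + 1)! ≤ {H : G.Subgraph | ∃ l, l % (n + 2) = 1 ∧ G.IsCycleSubgraph H l}.ncard := by
  choose w hw using fun σ : Equiv.Perm (Fin (n + 1)) =>
    hsat.exists_isColorOrderedCycle hvs hc (Equiv.Perm.decomposeFin_symm_apply_zero 0 σ)
  let F (σ : Equiv.Perm (Fin (n + 1))) :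
      {H : G.Subgraph | ∃ l, l % (n + 2) = 1 ∧ G.IsCycleSubgraph H l} :=
    ⟨(w σ).toSubgraph, (w σ).length, (hw σ).2.1, v, w σ, (hw σ).1, rfl, rfl⟩
  have hF : Function.Injective F := fun σ τ h => by
    have := (hw σ).perm_eq_of_toSubgraph_eq (hw τ) (Equiv.Perm.decomposeFin_symm_apply_zero 0 σ)
      (Equiv.Perm.decomposeFin_symm_apply_zero 0 τ) (congrArg Subtype.val h)
    exact (Prod.ext_iff.mp (Equiv.Perm.decomposeFin.symm.injective this)).2
  calc (n + 1)! = Nat.card (Equiv.Perm (Fin (n + 1))) := by simp [Fintype.card_perm]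
    _ ≤ _ := Nat.card_le_card_of_injective F hF
    _ = _ := Nat.card_coe_set_eq _

end ColorOrder

end SimpleGraph

theorem stmt2 {V : Type*} [Fintype V] (G : SimpleGraph V) (k : ℕ) (hk : 2 ≤ k)
    (hfew : {H : G.Subgraph | ∃ n, n % k = 1 ∧ G.IsCycleSubgraph H n}.ncard <
      Nat.factorial (k - 1)) :
    G.Colorable k := by
  obtain ⟨n, rfl⟩ : ∃ n, k = n + 2 := ⟨k - 2, by omega⟩
  by_contra hnc
  obtain ⟨s, v, hvs, ⟨c, hc⟩, hsat⟩ := SimpleGraph.exists_forcesAllColors (α := Fin (n + 2))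
    fun ⟨c, hc⟩ => hnc ⟨.mk c fun h => hc trivial trivial h⟩
  exact (hsat.factorial_le_ncard hvs hc).not_gt hfew
end

section
/- If k'/d' ≤ k/d (with k ≥ 2d, k' ≥ 2d'), then there is a graph homomorphism from K_{k':d'} to K_{k:d}. -/
/-- The circular clique `K_{k:d}` on vertex set `ZMod k`. -/
def circularClique (k d : ℕ) : SimpleGraph (ZMod k) :=
  SimpleGraph.fromRel (fun i j => d ≤ (j - i).val ∧ (j - i).val ≤ k - d)

/-- Flipping the orientation of the circular distance condition. -/
lemma flipRel {n e : ℕ} [NeZero n] (he : 2 * e ≤ n) {a b : ZMod n} (hne : a ≠ b)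
    (h : e ≤ (b - a).val ∧ (b - a).val ≤ n - e) :
    e ≤ (a - b).val ∧ (a - b).val ≤ n - e := by
  have h0 : b - a ≠ 0 := sub_ne_zero.mpr hne.symm
  have hv : (a - b).val = n - (b - a).val := by
    have hab : a - b = -(b - a) := by ring
    rw [hab, ZMod.neg_val]
    simp [h0]
  have hlt := ZMod.val_lt (b - a)
  omega

/-- The arithmetic core: bounds on the map `x ↦ x*d/d'`. -/
lemma keyNat (k d k' d' x y : ℕ) (hd : 0 < d) (hd' : 0 < d')
    (hk : 2 * d ≤ k) (hk' : 2 * d' ≤ k') (hle : k' * d ≤ k * d')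
    (hxy : x ≤ y) (h1 : d' ≤ y - x) (h2 : y - x ≤ k' - d') :
    d + x * d / d' ≤ y * d / d' ∧ y * d / d' ≤ k - d + x * d / d' := by
  set a := y - x with ha
  have hya : y * d = x * d + a * d := by
    have : x + a = y := by omega
    rw [← this, add_mul]
  have hdd : d * d' ≤ a * d := by
    rw [mul_comm]
    exact Nat.mul_le_mul_right d h1
  have hS : (k' - d') * d ≤ (k - d) * d' := by
    zify [show d' ≤ k' by omega, show d ≤ k by omega]
    nlinarith
  have ha2 : a * d ≤ (k - d) * d' := le_trans (Nat.mul_le_mul_right d h2) hS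
  constructor
  · rw [Nat.le_div_iff_mul_le hd']
    calc (d + x * d / d') * d' = d * d' + (x * d / d') * d' := by ring
      _ ≤ a * d + x * d := add_le_add hdd (Nat.div_mul_le_self _ _)
      _ = y * d := by omega
  · rw [← Nat.lt_succ_iff, Nat.div_lt_iff_lt_mul hd']
    have hxlt : x * d < (x * d / d' + 1) * d' := by
      have h3 := Nat.div_add_mod (x * d) d'
      have h4 := Nat.mod_lt (x * d) hd'
      have h5 : (x * d / d' + 1) * d' = d' * (x * d / d') + d' := by ring
      omega
    calc y * d = x * d + a * d := hya
      _ < (x * d / d' + 1) * d' + (k - d) * d' := by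
          exact Nat.add_lt_add_of_lt_of_le hxlt ha2
      _ = (k - d + x * d / d' + 1) * d' := by ring

/-- The main step: the image difference satisfies the distance bounds. -/
lemma keyZMod (k d k' d' : ℕ) [NeZero k] [NeZero k'] (hd : 0 < d) (hd' : 0 < d')
    (hk : 2 * d ≤ k) (hk' : 2 * d' ≤ k') (hle : k' * d ≤ k * d')
    (i j : ZMod k') (hlt : i.val ≤ j.val)
    (h1 : d' ≤ (j - i).val) (h2 : (j - i).val ≤ k' - d') :
    d ≤ (((j.val * d / d' : ℕ) : ZMod k) - ((i.val * d / d' : ℕ) : ZMod k)).val ∧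
      (((j.val * d / d' : ℕ) : ZMod k) - ((i.val * d / d' : ℕ) : ZMod k)).val ≤ k - d := by
  have hsub : (j - i).val = j.val - i.val := ZMod.val_sub hlt
  rw [hsub] at h1 h2
  obtain ⟨hlo, hhi⟩ := keyNat k d k' d' i.val j.val hd hd' hk hk' hle hlt h1 h2
  have hAB : i.val * d / d' ≤ j.val * d / d' := by omega
  have hcast : ((j.val * d / d' : ℕ) : ZMod k) - ((i.val * d / d' : ℕ) : ZMod k)
      = ((j.val * d / d' - i.val * d / d' : ℕ) : ZMod k) := by
    rw [Nat.cast_sub hAB]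
  have hklt : j.val * d / d' - i.val * d / d' < k := by
    have : 0 < k := Nat.pos_of_ne_zero (NeZero.ne k)
    omega
  rw [hcast, ZMod.val_cast_of_lt hklt]
  omega

/-- If `k'/d' ≤ k/d` then `K_{k':d'}` admits a homomorphism into `K_{k:d}`. -/
theorem stmt11 (k d k' d' : ℕ) (hd : 0 < d) (hd' : 0 < d')
    (hk : 2 * d ≤ k) (hk' : 2 * d' ≤ k') (hle : k' * d ≤ k * d') :
    Nonempty (circularClique k' d' →g circularClique k d) := by
  haveI : NeZero k := ⟨by omega⟩
  haveI : NeZero k' := ⟨by omega⟩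
  refine ⟨⟨fun x => ((x.val * d / d' : ℕ) : ZMod k), ?_⟩⟩
  intro i j hadj
  rw [circularClique, SimpleGraph.fromRel_adj] at hadj ⊢
  obtain ⟨hne, hrel⟩ := hadj
  have hv : d' ≤ (j - i).val ∧ (j - i).val ≤ k' - d' := by
    rcases hrel with h | h
    · exact h
    · exact flipRel hk' hne.symm h
  have hne' : ∀ a b : ZMod k,
      d ≤ (b - a).val → a ≠ b := by
    intro a b hab heq
    rw [heq, sub_self, ZMod.val_zero] at hab
    omega
  rcases le_or_gt i.val j.val with hle2 | hlt
  · obtain ⟨h1, h2⟩ := keyZMod k d k' d' hd hd' hk hk' hle i j hle2 hv.1 hv.2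
    exact ⟨hne' _ _ h1, Or.inl ⟨h1, h2⟩⟩
  · have hv' := flipRel hk' hne hv
    obtain ⟨h1, h2⟩ := keyZMod k d k' d' hd hd' hk hk' hle j i hlt.le hv'.1 hv'.2
    exact ⟨(hne' _ _ h1).symm, Or.inr ⟨h1, h2⟩⟩
end

section
/- The complete graph K_{k+1} contains no cycle of length congruent to 2 modulo k, but for every r with 2 ≤ r ≤ k and every residue t mod r with (r,t) ≠ (k,2), K_{k+1} contains a cycle of length congruent to t modulo r. -/
/-!
A cycle in `K_{k+1}` has length `n` with `3 ≤ n ≤ k + 1`, and `K_{k+1}` has cycles of all those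
lengths. Modulo `k` these lengths leave the residues `3, …, k - 1, 0, 1`, which misses exactly `2`.
For `r < k` the window `[3, k + 1]` contains `r` consecutive integers `3, …, r + 2`, so every
residue occurs; for `r = k` the window is `k - 1` consecutive integers and only `k + 2 ≡ 2` is lost.
-/

open SimpleGraph

namespace SimpleGraph.Walk

variable {V : Type*} {G : SimpleGraph V} {u : V}

lemma IsCycle.length_le_card [Fintype V] {p : G.Walk u u} (hp : p.IsCycle) :
    p.length ≤ Fintype.card V := by
  have := hp.isPath_tail.length_lt
  rw [← p.length_tail_add_one hp.not_nil]
  omega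

end SimpleGraph.Walk

lemma SimpleGraph.exists_isCycle_completeGraph_length_eq {V : Type*} [Fintype V] {n : ℕ}
    (h3 : 3 ≤ n) (hn : n ≤ Fintype.card V) :
    ∃ (v : V) (p : (completeGraph V).Walk v v), p.IsCycle ∧ p.length = n := by
  rw [← cycleGraph_isContained_iff (by omega), isContained_top_iff]
  exact Function.Embedding.nonempty_of_card_le (by simpa using hn)

lemma Nat.mod_ne_two_of_three_le_of_le_succ {n k : ℕ} (h3 : 3 ≤ n) (hn : n ≤ k + 1) :
    n % k ≠ 2 := by
  rcases Nat.lt_or_ge n k with h | h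
  · rw [Nat.mod_eq_of_lt h]
    omega
  · rw [Nat.mod_eq_sub_mod h, Nat.mod_eq_of_lt (by omega)]
    omega

lemma Nat.exists_three_le_le_succ_mod_eq {k r t : ℕ} (hk : 3 ≤ k) (hr : 2 ≤ r) (hrk : r ≤ k)
    (ht : t < r) (hne : ¬(r = k ∧ t = 2)) : ∃ n, 3 ≤ n ∧ n ≤ k + 1 ∧ n % r = t := by
  by_cases h₁ : 3 ≤ t
  · exact ⟨t, h₁, by omega, Nat.mod_eq_of_lt ht⟩
  by_cases h₂ : 3 ≤ t + r
  · exact ⟨t + r, h₂, by omega, by simp [Nat.mod_eq_of_lt ht]⟩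
  · exact ⟨t + 2 * r, by omega, by omega, by simp [Nat.mod_eq_of_lt ht]⟩

theorem stmt13 (k : ℕ) (hk : 3 ≤ k) :
    (∀ (v : Fin (k + 1)) (w : (SimpleGraph.completeGraph (Fin (k + 1))).Walk v v),
        w.IsCycle → w.length % k ≠ 2) ∧
    ∀ r, 2 ≤ r → r ≤ k → ∀ t < r, ¬(r = k ∧ t = 2) →
      ∃ (v : Fin (k + 1)) (w : (SimpleGraph.completeGraph (Fin (k + 1))).Walk v v),
        w.IsCycle ∧ w.length % r = t := by
  refine ⟨fun v w hw => ?_, fun r hr hrk t ht hne => ?_⟩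
  · have hle := hw.length_le_card
    rw [Fintype.card_fin] at hle
    exact Nat.mod_ne_two_of_three_le_of_le_succ hw.three_le_length hle
  · obtain ⟨n, h3, hn, hmod⟩ := Nat.exists_three_le_le_succ_mod_eq hk hr hrk ht hne
    obtain ⟨v, w, hw, rfl⟩ :=
      exists_isCycle_completeGraph_length_eq (V := Fin (k + 1)) h3 (by simpa using hn)
    exact ⟨v, w, hw, hmod⟩
end

section
/- Let φ be a proper k-coloring of G - xy with φ(x) = φ(y), and let σ be a cyclic permutation of a subset of the colors containing φ(x). Define the digraph D_σ on V(G) with arc uv iff uv ∈ E(G) and σ(φ(u)) = φ(v). If G is not k-colorable, then y is reachable from x in D_σ. -/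
theorem stmt17 {V : Type*} [Fintype V] (G : SimpleGraph V) (x y : V) (hxy : G.Adj x y)
    (k : ℕ) (φ : V → Fin k)
    (hproper : ∀ u v : V, (G.deleteEdges {s(x, y)}).Adj u v → φ u ≠ φ v)
    (hxyeq : φ x = φ y)
    (σ : Equiv.Perm (Fin k)) (S : Finset (Fin k)) (hxS : φ x ∈ S)
    (hcyc : σ.IsCycleOn ↑S) (hfix : ∀ a ∉ S, σ a = a)
    (hG : ¬ G.Colorable k) :
    Relation.ReflTransGen (fun u v => G.Adj u v ∧ σ (φ u) = φ v) x y := by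
  classical
  by_contra hreach
  apply hG
  set R : V → Prop := fun v => Relation.ReflTransGen (fun u v => G.Adj u v ∧ σ (φ u) = φ v) x v
    with hR
  have hRx : R x := Relation.ReflTransGen.refl
  have hproper' : ∀ u v : V, G.Adj u v → s(u, v) ≠ s(x, y) → φ u ≠ φ v := by
    intro u v huv hne
    exact hproper u v (by simp [SimpleGraph.deleteEdges_adj, huv, hne])
  refine ⟨SimpleGraph.Coloring.mk (fun v => if R v then σ (φ v) else φ v) ?_⟩
  intro u v huv
  by_cases hu : R u <;> by_cases hv : R v <;> simp only [hu, hv, if_pos, if_neg, if_true,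
    if_false, ne_eq]
  · -- both reachable
    intro h
    refine hproper' u v huv ?_ (σ.injective h)
    intro he
    rw [Sym2.eq_iff] at he
    rcases he with ⟨rfl, rfl⟩ | ⟨rfl, rfl⟩
    · exact hreach hv
    · exact hreach hu
  · intro h
    exact hv (hu.tail ⟨huv, h⟩)
  · intro h
    exact hu (hv.tail ⟨huv.symm, h.symm⟩)
  · intro h
    refine hproper' u v huv ?_ h
    intro he
    rw [Sym2.eq_iff] at he
    rcases he with ⟨rfl, rfl⟩ | ⟨rfl, rfl⟩
    · exact hu hRx
    · exact hv hRx
end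

section
/- If φ is a proper k-coloring of G - xy with φ(x) = φ(y) and σ is a cyclic permutation of a set of colors containing φ(x), and if G is not k-colorable, then the digraph D_σ (arc uv iff uv ∈ E(G) and σ(φ(u)) = φ(v)) contains a directed cycle, and every directed cycle in D_σ has length divisible by the order of σ. -/
open Relation

private lemma key_reach {V : Type*} (G : SimpleGraph V) (x y : V) (hxy : G.Adj x y)
    {k : ℕ} (φ : V → Fin k)
    (hproper : ∀ u v : V, (G.deleteEdges {s(x, y)}).Adj u v → φ u ≠ φ v)
    (σ : Equiv.Perm (Fin k))
    (hG : ¬ G.Colorable k) :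
    Relation.ReflTransGen (fun u v => G.Adj u v ∧ σ (φ u) = φ v) x y := by
  classical
  set R : V → V → Prop := fun u v => G.Adj u v ∧ σ (φ u) = φ v with hR
  by_contra hA
  apply hG
  have hdel : ∀ u v : V, G.Adj u v → φ u = φ v → s(u, v) = s(x, y) := by
    intro u v huv heq
    by_contra hne
    exact hproper u v (SimpleGraph.deleteEdges_adj.mpr ⟨huv, by simpa using hne⟩) heq
  refine ⟨SimpleGraph.Coloring.mk
    (fun v => if Relation.ReflTransGen R x v then σ (φ v) else φ v) ?_⟩
  intro u v huv h_eq
  by_cases hu : Relation.ReflTransGen R x u <;>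
    by_cases hv : Relation.ReflTransGen R x v <;>
    simp only [hu, hv, if_pos, if_neg, if_true, if_false] at h_eq
  · -- both reachable
    have heq : φ u = φ v := σ.injective h_eq
    rcases Sym2.eq_iff.mp (hdel u v huv heq) with ⟨h1, h2⟩ | ⟨h1, h2⟩
    · exact hA (h2 ▸ hv)
    · exact hA (h1 ▸ hu)
  · -- u reachable, v not : arc u → v
    exact hv (hu.tail ⟨huv, h_eq⟩)
  · -- v reachable, u not : arc v → u
    exact hu (hv.tail ⟨huv.symm, h_eq.symm⟩)
  · -- neither reachable
    rcases Sym2.eq_iff.mp (hdel u v huv h_eq) with ⟨h1, h2⟩ | ⟨h1, h2⟩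
    · exact hu (h1 ▸ Relation.ReflTransGen.refl)
    · exact hv (h2 ▸ Relation.ReflTransGen.refl)

theorem stmt18 {V : Type*} [Fintype V] (G : SimpleGraph V) (x y : V) (hxy : G.Adj x y)
    (k : ℕ) (φ : V → Fin k)
    (hproper : ∀ u v : V, (G.deleteEdges {s(x, y)}).Adj u v → φ u ≠ φ v)
    (hxyeq : φ x = φ y)
    (σ : Equiv.Perm (Fin k)) (S : Finset (Fin k)) (hxS : φ x ∈ S)
    (hcyc : σ.IsCycleOn ↑S) (hfix : ∀ a ∉ S, σ a = a)
    (hG : ¬ G.Colorable k) :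
    (∃ v : V, Relation.TransGen (fun u v => G.Adj u v ∧ σ (φ u) = φ v) v v) ∧
      ∀ (n : ℕ) (c : ZMod n → V), 0 < n → Function.Injective c →
        (∀ i : ZMod n, G.Adj (c i) (c (i + 1)) ∧ σ (φ (c i)) = φ (c (i + 1))) →
        S.card ∣ n := by
  have hdel : ∀ u v : V, G.Adj u v → φ u = φ v → s(u, v) = s(x, y) := by
    intro u v huv heq
    by_contra hne
    exact hproper u v (SimpleGraph.deleteEdges_adj.mpr ⟨huv, by simpa using hne⟩) heq
  constructor
  · have hproper' : ∀ u v : V, (G.deleteEdges {s(y, x)}).Adj u v → φ u ≠ φ v := by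
      rw [Sym2.eq_swap]; exact hproper
    have h1 := key_reach G x y hxy φ hproper σ hG
    have h2 := key_reach G y x hxy.symm φ hproper' σ hG
    refine ⟨x, ?_⟩
    rcases h1.cases_head with rfl | ⟨c, hxc, hcy⟩
    · exact absurd rfl hxy.ne
    · exact Relation.TransGen.head' hxc (hcy.trans h2)
  · intro n c hn hinj harc
    have hS : ∀ i : ZMod n, φ (c i) ∈ S := by
      intro i
      by_contra h
      have h1 : σ (φ (c i)) = φ (c i) := hfix _ h
      have h2 : φ (c i) = φ (c (i + 1)) := by rw [← (harc i).2, h1]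
      rcases Sym2.eq_iff.mp (hdel _ _ (harc i).1 h2) with ⟨ha, hb⟩ | ⟨ha, hb⟩
      · exact h (ha ▸ hxS)
      · exact h (by rw [ha, ← hxyeq]; exact hxS)
    have hpow : ∀ j : ℕ, φ (c (j : ZMod n)) = (σ ^ j) (φ (c 0)) := by
      intro j
      induction j with
      | zero => simp
      | succ j ih =>
        have : ((j + 1 : ℕ) : ZMod n) = (j : ZMod n) + 1 := by push_cast; ring
        rw [this, ← (harc _).2, ih, pow_succ', Equiv.Perm.mul_apply]
    have hfin : (σ ^ n) (φ (c 0)) = φ (c 0) := by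
      have := hpow n
      rw [ZMod.natCast_self] at this; exact this.symm
    exact (hcyc.pow_apply_eq (hS 0)).mp hfin
end

section
/- For integers q, k ≥ 1, let v_1, ..., v_{qk+1} be qk+1 labeled elements arranged in a cycle (read cyclically from any starting point), and call an index i a backward step of a linear order if v_i is placed after v_{i+1}; then the probability that a uniformly random linear order of v_1, ..., v_{qk+1} has at most q backward steps is at most q^{qk+1}/(qk)!. -/
open Finset
open scoped Fin.NatCast

variable {n : ℕ} [NeZero n]

/-- number of "linear descents" of `w` among indices `< m`. -/
def rr (w : Fin n → Fin n) (m : ℕ) : ℕ :=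
  ((Finset.range m).filter (fun t => w ((t + 1 : ℕ) : Fin n) < w ((t : ℕ) : Fin n))).card

lemma rr_mono (w : Fin n → Fin n) : Monotone (rr w) := fun a b hab =>
  Finset.card_le_card (Finset.filter_subset_filter _ (Finset.range_subset_range.2 hab))

lemma chain (w : Fin n → Fin n) (a : ℕ) :
    ∀ b : ℕ, a ≤ b → b < n → (∀ t, a ≤ t → t < b → ¬ w ((t + 1 : ℕ) : Fin n) < w ((t : ℕ) : Fin n)) →
      w ((a : ℕ) : Fin n) ≤ w ((b : ℕ) : Fin n) := by
  intro b
  induction b with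
  | zero =>
    intro h _ _
    have : a = 0 := Nat.le_zero.mp h
    subst this; exact le_refl _
  | succ b ih =>
    intro hab hbn hno
    rcases Nat.lt_or_ge a (b+1) with h | h
    · have hab' : a ≤ b := by omega
      have h1 : w ((a : ℕ) : Fin n) ≤ w ((b : ℕ) : Fin n) :=
        ih hab' (by omega) (fun t ht ht' => hno t ht (by omega))
      have h2 : ¬ w ((b + 1 : ℕ) : Fin n) < w ((b : ℕ) : Fin n) := hno b hab' (by omega)
      exact h1.trans (not_lt.mp h2)
    · have : a = b + 1 := by omega
      subst this; exact le_refl _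

lemma no_descent_of_rr_eq (w : Fin n → Fin n) {a b : ℕ} (hab : a ≤ b)
    (h : rr w a = rr w b) {t : ℕ} (ht : a ≤ t) (ht' : t < b) :
    ¬ w ((t + 1 : ℕ) : Fin n) < w ((t : ℕ) : Fin n) := by
  intro hd
  have hsub : (Finset.range a).filter (fun t => w ((t + 1 : ℕ) : Fin n) < w ((t : ℕ) : Fin n)) ⊆
      (Finset.range b).filter (fun t => w ((t + 1 : ℕ) : Fin n) < w ((t : ℕ) : Fin n)) :=
    Finset.filter_subset_filter _ (Finset.range_subset_range.2 hab)
  have heq := Finset.eq_of_subset_of_card_le hsub (le_of_eq h.symm)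
  have : t ∈ (Finset.range b).filter (fun t => w ((t + 1 : ℕ) : Fin n) < w ((t : ℕ) : Fin n)) := by
    exact Finset.mem_filter.2 ⟨Finset.mem_range.2 ht', hd⟩
  rw [← heq] at this
  have := Finset.mem_range.1 (Finset.mem_filter.1 this).1
  omega

lemma compareB (w : Fin n → Fin n) (hw : Function.Injective w) {a b : ℕ}
    (hab : a < b) (hbn : b < n) :
    rr w a < rr w b ∨ (rr w a = rr w b ∧ w ((a : ℕ) : Fin n) < w ((b : ℕ) : Fin n)) := by
  rcases lt_or_eq_of_le (rr_mono w (le_of_lt hab)) with h | h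
  · exact Or.inl h
  · refine Or.inr ⟨h, ?_⟩
    have hle := chain w a b (le_of_lt hab) hbn
      (fun t ht ht' => no_descent_of_rr_eq w (le_of_lt hab) h ht ht')
    have hne : ((a : ℕ) : Fin n) ≠ ((b : ℕ) : Fin n) := by
      intro hcast
      have ha : (((a : ℕ) : Fin n) : ℕ) = a := Fin.val_cast_of_lt (by omega)
      have hb : (((b : ℕ) : Fin n) : ℕ) = b := Fin.val_cast_of_lt hbn
      rw [hcast, hb] at ha; omega
    exact lt_of_le_of_ne hle (fun hc => hne (hw hc))

lemma key_iff (w : Equiv.Perm (Fin n)) (v v' : Fin n) :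
    w.symm v < w.symm v' ↔
      (rr ⇑w (w.symm v : ℕ) < rr ⇑w (w.symm v' : ℕ) ∨
        (rr ⇑w (w.symm v : ℕ) = rr ⇑w (w.symm v' : ℕ) ∧ v < v')) := by
  have key : ∀ x y : Fin n, x < y →
      rr ⇑w (x : ℕ) < rr ⇑w (y : ℕ) ∨ (rr ⇑w (x : ℕ) = rr ⇑w (y : ℕ) ∧ w x < w y) := by
    intro x y hxy
    have := compareB (n := n) (w := ⇑w) w.injective (hab := hxy) (hbn := y.isLt)
    rwa [Fin.cast_val_eq_self, Fin.cast_val_eq_self] at this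
  constructor
  · intro h
    have := key _ _ h
    simpa using this
  · intro h
    rcases lt_trichotomy (w.symm v) (w.symm v') with hlt | heq | hgt
    · exact hlt
    · exfalso
      have hvv : v = v' := by
        have := congrArg w heq; simpa using this
      subst hvv
      rcases h with h | ⟨_, h⟩ <;> exact absurd h (lt_irrefl _)
    · exfalso
      have h2 := key _ _ hgt
      simp only [Equiv.apply_symm_apply] at h2
      rcases h with h | ⟨he, hv⟩ <;> rcases h2 with h' | ⟨he', hv'⟩
      · omega
      · omega
      · omega
      · exact absurd hv (asymm hv')

lemma reconstruct (w w' : Equiv.Perm (Fin n))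
    (h : ∀ v : Fin n, rr ⇑w (w.symm v : ℕ) = rr ⇑w' (w'.symm v : ℕ)) : w = w' := by
  have hmono : ∀ (u u' : Equiv.Perm (Fin n)),
      (∀ v : Fin n, rr ⇑u (u.symm v : ℕ) = rr ⇑u' (u'.symm v : ℕ)) →
      StrictMono (fun j => u'.symm (u j)) := by
    intro u u' huu j j' hjj
    have h1 : u.symm (u j) < u.symm (u j') := by simpa using hjj
    have h2 := (key_iff u (u j) (u j')).1 h1
    rw [huu (u j), huu (u j')] at h2
    exact (key_iff u' (u j) (u j')).2 h2
  have h1 := hmono w w' h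
  have h2 := hmono w' w (fun v => (h v).symm)
  haveI : WellFoundedLT (Fin n) := inferInstance
  have hid : ∀ j : Fin n, w'.symm (w j) = j := by
    intro j
    have ha : j ≤ w'.symm (w j) := h1.le_apply
    have hb : w'.symm (w j) ≤ j := by
      have := h2.le_apply (x := w'.symm (w j))
      simpa using this
    exact le_antisymm hb ha
  apply Equiv.ext
  intro j
  have h3 := congrArg w' (hid j)
  simpa using h3

lemma descent_exists (hn : 2 ≤ n) (p : Equiv.Perm (Fin n)) :
    ∃ i : Fin n, p (i + 1) < p i := by
  refine ⟨p.symm ⟨n - 1, by omega⟩, ?_⟩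
  set i := p.symm ⟨n - 1, by omega⟩ with hi
  have hpi : p i = ⟨n - 1, by omega⟩ := Equiv.apply_symm_apply p _
  have hne : i + 1 ≠ i := by
    intro hcon
    have h0 : (1 : Fin n) = 0 := by
      have := congrArg (fun x => x - i) hcon
      simpa [add_sub_cancel_right] using this
    have h1 : ((1 : ℕ) : Fin n) = 0 := by rwa [Nat.cast_one]
    have := Nat.le_of_dvd one_pos (Fin.natCast_eq_zero.mp h1)
    omega
  have hne' : p (i + 1) ≠ p i := fun hc => hne (p.injective hc)
  have hle : (p (i + 1)).val ≤ n - 1 := by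
    have := (p (i + 1)).isLt; omega
  rw [Fin.lt_def]
  rw [hpi] at hne' ⊢
  simp only []
  have : (p (i+1)).val ≠ n - 1 := fun hc => hne' (Fin.ext hc)
  omega

noncomputable def i0 (hn : 2 ≤ n) (p : Equiv.Perm (Fin n)) : Fin n :=
  (descent_exists hn p).choose

lemma i0_spec (hn : 2 ≤ n) (p : Equiv.Perm (Fin n)) :
    p (i0 hn p + 1) < p (i0 hn p) := (descent_exists hn p).choose_spec

noncomputable def W (hn : 2 ≤ n) (p : Equiv.Perm (Fin n)) : Equiv.Perm (Fin n) :=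
  (Equiv.addLeft (i0 hn p + 1)).trans p

lemma W_apply (hn : 2 ≤ n) (p : Equiv.Perm (Fin n)) (x : Fin n) :
    W hn p x = p (i0 hn p + 1 + x) := rfl

lemma rr_W_bound (hn : 2 ≤ n) {q : ℕ} (p : Equiv.Perm (Fin n))
    (hp : ({i : Fin n | p (i + 1) < p i}).ncard ≤ q) (m : ℕ) (hm : m ≤ n - 1) :
    rr ⇑(W hn p) m + 1 ≤ q := by
  classical
  set c := i0 hn p + 1 with hc
  set Dfin : Finset (Fin n) := Finset.univ.filter (fun i => p (i + 1) < p i) with hD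
  have hDcard : Dfin.card ≤ q := by
    have : ({i : Fin n | p (i + 1) < p i}).ncard = Dfin.card := by
      rw [Set.ncard_eq_toFinset_card']
      congr 1
      simp [hD]
    omega
  have hi0 : i0 hn p ∈ Dfin := by
    simp [hD, i0_spec hn p]
  -- the filter of linear descents of W injects into Dfin.erase (i0 hn p)
  set DF := (Finset.range (n - 1)).filter
      (fun t => W hn p ((t + 1 : ℕ) : Fin n) < W hn p ((t : ℕ) : Fin n)) with hDF
  have hmaps : ∀ t ∈ DF, c + (t : Fin n) ∈ Dfin.erase (i0 hn p) := by
    intro t ht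
    rw [hDF, Finset.mem_filter, Finset.mem_range] at ht
    obtain ⟨htn, hdesc⟩ := ht
    refine Finset.mem_erase.2 ⟨?_, ?_⟩
    · intro hcon
      have h1 : (1 : Fin n) + (t : Fin n) = 0 := by
        have := congrArg (fun x => x - i0 hn p) hcon
        simp only [hc] at this
        rw [add_assoc] at this
        simpa [add_comm, add_sub_cancel_right] using this
      have h2 : ((t + 1 : ℕ) : Fin n) = 0 := by
        push_cast
        rw [add_comm]; exact h1
      have := Nat.le_of_dvd (by omega) (Fin.natCast_eq_zero.mp h2)
      omega
    · rw [hD, Finset.mem_filter]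
      refine ⟨Finset.mem_univ _, ?_⟩
      have hstep : c + (t : Fin n) + 1 = c + ((t + 1 : ℕ) : Fin n) := by
        push_cast
        rw [add_assoc]
      rw [hstep]
      simpa [W_apply] using hdesc
  have hinj : Set.InjOn (fun t : ℕ => c + (t : Fin n)) DF := by
    intro t ht t' ht' he
    rw [hDF, Finset.coe_filter] at ht ht'
    simp only [Set.mem_setOf_eq, Finset.mem_range] at ht ht'
    have h1 : (t : Fin n) = (t' : Fin n) := by
      have := congrArg (fun x => x - c) he
      simpa [add_comm, add_sub_cancel_right] using this
    have h2 := congrArg Fin.val h1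
    rwa [Fin.val_cast_of_lt (by omega), Fin.val_cast_of_lt (by omega)] at h2
  have hcard : DF.card ≤ (Dfin.erase (i0 hn p)).card :=
    Finset.card_le_card_of_injOn _ hmaps hinj
  have herase : (Dfin.erase (i0 hn p)).card = Dfin.card - 1 :=
    Finset.card_erase_of_mem hi0
  have hrr : rr ⇑(W hn p) m ≤ DF.card := by
    rw [hDF]
    exact Finset.card_le_card (Finset.filter_subset_filter _ (Finset.range_subset_range.2 hm))
  have hpos : 1 ≤ Dfin.card := Finset.card_pos.2 ⟨_, hi0⟩
  omega

lemma count_bound (hn : 2 ≤ n) {q : ℕ} (hq : 1 ≤ q) :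
    ({p : Equiv.Perm (Fin n) | ({i : Fin n | p (i + 1) < p i}).ncard ≤ q}).ncard
      ≤ n * q ^ n := by
  classical
  set S := {p : Equiv.Perm (Fin n) | ({i : Fin n | p (i + 1) < p i}).ncard ≤ q} with hS
  set F : Equiv.Perm (Fin n) → Fin n × (Fin n → Fin q) := fun p =>
    (i0 hn p, fun v => ⟨min (rr ⇑(W hn p) (((W hn p).symm v : Fin n) : ℕ)) (q - 1),
      by omega⟩) with hF
  have hmin : ∀ p ∈ S, ∀ v : Fin n,
      min (rr ⇑(W hn p) (((W hn p).symm v : Fin n) : ℕ)) (q - 1)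
        = rr ⇑(W hn p) (((W hn p).symm v : Fin n) : ℕ) := by
    intro p hp v
    have hlt := ((W hn p).symm v).isLt
    have := rr_W_bound hn p hp (((W hn p).symm v : Fin n) : ℕ) (by omega)
    omega
  have hinj : Set.InjOn F S := by
    intro p hp p' hp' he
    rw [hF] at he
    have h1 : i0 hn p = i0 hn p' := congrArg Prod.fst he
    have h2 := congrArg Prod.snd he
    simp only [] at h2
    have h3 : ∀ v : Fin n,
        rr ⇑(W hn p) (((W hn p).symm v : Fin n) : ℕ)
          = rr ⇑(W hn p') (((W hn p').symm v : Fin n) : ℕ) := by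
      intro v
      have := congrFun h2 v
      have hval := congrArg Fin.val this
      simp only [] at hval
      rwa [hmin p hp v, hmin p' hp' v] at hval
    have hW : W hn p = W hn p' := reconstruct _ _ h3
    apply Equiv.ext
    intro x
    have e1 : p x = W hn p (-(i0 hn p + 1) + x) := by
      rw [W_apply]
      congr 1
      abel
    have e2 : p' x = W hn p' (-(i0 hn p' + 1) + x) := by
      rw [W_apply]
      congr 1
      abel
    rw [e1, e2, hW, h1]
  have hle : S.ncard ≤ (Set.univ : Set (Fin n × (Fin n → Fin q))).ncard :=
    Set.ncard_le_ncard_of_injOn F (fun a _ => Set.mem_univ _) hinj Set.finite_univ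
  rwa [Set.ncard_univ, Nat.card_eq_fintype_card, Fintype.card_prod, Fintype.card_fun,
    Fintype.card_fin, Fintype.card_fin] at hle

/-- For a uniformly random linear order (recorded by the position permutation `p`)
on the vertices `v_0, …, v_{qk}` of a cycle, the probability of having at most `q`
backward steps (cyclic indices `i` with `v_{i+1}` preceding `v_i`) is at most
`q^(qk+1)/(qk)!`. -/
theorem stmt19 (q k : ℕ) (hq : 1 ≤ q) (hk : 1 ≤ k) :
    (({p : Equiv.Perm (Fin (q * k + 1)) |
        {i : Fin (q * k + 1) | p (i + 1) < p i}.ncard ≤ q}.ncard : ℝ) /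
        Nat.factorial (q * k + 1)) ≤
      (q : ℝ) ^ (q * k + 1) / Nat.factorial (q * k) := by
  have hqk : 1 ≤ q * k := le_trans (by norm_num) (Nat.mul_le_mul hq hk)
  haveI : NeZero (q * k + 1) := ⟨by omega⟩
  have hcount := count_bound (n := q * k + 1) (by omega) hq
  have hfacpos : (0 : ℝ) < (Nat.factorial (q * k + 1) : ℝ) :=
    Nat.cast_pos.2 (Nat.factorial_pos _)
  have step1 : (({p : Equiv.Perm (Fin (q * k + 1)) |
        {i : Fin (q * k + 1) | p (i + 1) < p i}.ncard ≤ q}.ncard : ℝ) /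
        Nat.factorial (q * k + 1)) ≤
      (((q * k + 1) * q ^ (q * k + 1) : ℕ) : ℝ) / Nat.factorial (q * k + 1) := by
    gcongr
  refine step1.trans (le_of_eq ?_)
  rw [Nat.factorial_succ]
  push_cast
  rw [mul_div_mul_left _ _ (by positivity : ((q : ℝ) * (k : ℝ) + 1) ≠ 0)]
end
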